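/- arXiv:1209.3477 — 4 statements merged into one kernel-verified Lean document; each statement's English description precedes it below -/
import Mathlib

section
/- If a matrix A over F_q defines a linear map from ℓ^⋄ (the countable direct product of copies of F_q) to ℓ (the countable direct sum), then A has only finitely many nonzero entries. -/
/-!
Every column of `A` is finitely supported (take `w = 1`) and every row is (take `w` a basis
vector). If the support of `A` were infinite, a greedy choice would give nonzero entries
`A iₙ jₙ` with `A iₘ jₙ = 0` for all `m ≠ n`: at each step only finitely many rows and columns
are excluded, and these meet the support in a finite set. The indicator `w` of `{iₙ}` then has
`(w A)_{jₙ} = A iₙ jₙ ≠ 0` for infinitely many distinct `jₙ`.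
-/

open Function Set

section CrossFreeSeq

variable {α β : Type*} {s : Set (α × β)}

lemma Set.finite_inter_fst_preimage (hrow : ∀ a, {b | (a, b) ∈ s}.Finite) {t : Set α}
    (ht : t.Finite) : (s ∩ Prod.fst ⁻¹' t).Finite :=
  (ht.prod (ht.biUnion fun a _ => hrow a)).subset fun _ ⟨hs, ha⟩ => ⟨ha, mem_biUnion ha hs⟩

lemma Set.finite_inter_snd_preimage (hcol : ∀ b, {a | (a, b) ∈ s}.Finite) {t : Set β}
    (ht : t.Finite) : (s ∩ Prod.snd ⁻¹' t).Finite :=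
  ((ht.biUnion fun b _ => hcol b).prod ht).subset fun _ ⟨hs, hb⟩ => ⟨mem_biUnion hb hs, hb⟩

lemma Set.Infinite.exists_seq_pairwise_cross_notMem (hs : s.Infinite)
    (hrow : ∀ a, {b | (a, b) ∈ s}.Finite) (hcol : ∀ b, {a | (a, b) ∈ s}.Finite) :
    ∃ f : ℕ → α × β, (∀ n, f n ∈ s) ∧ Pairwise fun m n => ((f m).1, (f n).2) ∉ s := by
  let r : α × β → α × β → Prop := fun x y => (x.1, y.2) ∉ s ∧ (y.1, x.2) ∉ s
  have : Std.Symm r := ⟨fun _ _ h => h.symm⟩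
  suffices ∀ F : Finset (α × β), ∃ y ∈ s, ∀ x ∈ F, r x y by
    obtain ⟨f, hfs, hf⟩ := exists_seq_of_forall_finset_exists' (· ∈ s) r fun F _ => this F
    exact ⟨f, hfs, fun m n hmn => (hf hmn).1⟩
  intro F
  have hbad : (s ∩ Prod.fst ⁻¹' (⋃ x ∈ F, {a | (a, x.2) ∈ s}) ∪
      s ∩ Prod.snd ⁻¹' (⋃ x ∈ F, {b | (x.1, b) ∈ s})).Finite :=
    (finite_inter_fst_preimage hrow (F.finite_toSet.biUnion fun x _ => hcol x.2)).union
      (finite_inter_snd_preimage hcol (F.finite_toSet.biUnion fun x _ => hrow x.1))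
  obtain ⟨y, hys, hy⟩ := (hs.sdiff hbad).nonempty
  exact ⟨y, hys, fun x hx => ⟨fun hxy => hy (.inr ⟨hys, mem_biUnion hx hxy⟩),
    fun hyx => hy (.inl ⟨hys, mem_biUnion hx hyx⟩)⟩⟩

end CrossFreeSeq

lemma finsum_indicator_range_fst_mul {α β R : Type*} [NonAssocSemiring R] {A : α → β → R}
    {f : ℕ → α × β} (hf : Pairwise fun m n => A (f m).1 (f n).2 = 0) (n : ℕ) :
    ∑ᶠ a, (range fun m => (f m).1).indicator 1 a * A a (f n).2 = A (f n).1 (f n).2 := by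
  rw [finsum_eq_single _ (f n).1, indicator_of_mem (mem_range_self n), Pi.one_apply, one_mul]
  intro a ha
  by_cases hmem : a ∈ range fun m => (f m).1
  · obtain ⟨m, rfl⟩ := hmem
    rw [hf fun hmn => ha (by subst hmn; rfl), mul_zero]
  · rw [indicator_of_notMem hmem, zero_mul]

theorem matrix_prod_to_directSum_finite_general (K : Type*) [Field K]
    (A : ℕ → ℕ → K)
    (h : ∀ w : ℕ → K,
        (∀ j, (Function.support fun i => w i * A i j).Finite) ∧
        (Function.support fun j => ∑ᶠ i, w i * A i j).Finite) :
    (Function.support fun p : ℕ × ℕ => A p.1 p.2).Finite := by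
  have hcol (j : ℕ) : (support fun i => A i j).Finite := by simpa using (h 1).1 j
  have hrow (i : ℕ) : (support (A i)).Finite := by
    have hsum (j : ℕ) : ∑ᶠ i', (Pi.single i 1 : ℕ → K) i' * A i' j = A i j := by
      rw [finsum_eq_single _ i fun i' hi' => by rw [Pi.single_eq_of_ne hi', zero_mul],
        Pi.single_eq_same, one_mul]
    simpa only [hsum] using (h (Pi.single i 1)).2
  by_contra hA
  obtain ⟨f, hfA, hf⟩ := Set.Infinite.exists_seq_pairwise_cross_notMem hA hrow hcol
  simp only [mem_support, ne_eq, not_not] at hfA hf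
  have hsnd : Injective fun n => (f n).2 := fun m n (hmn : (f m).2 = (f n).2) => by
    by_contra hne
    exact hfA m (hmn ▸ hf hne)
  refine (infinite_range_of_injective hsnd).mono ?_ (h ((range fun m => (f m).1).indicator 1)).2
  rintro _ ⟨n, rfl⟩
  rw [mem_support, finsum_indicator_range_fst_mul hf]
  exact hfA n

/-- If a matrix `A` over `F_q` defines a linear map from `ℓ^⋄ = ∏_{j∈ℕ} F_q` to
`ℓ = ⊕_{j∈ℕ} F_q` (i.e. for every sequence `w`, each sum `∑ᵢ wᵢ aᵢⱼ` has only finitely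
many nonzero summands, and the resulting sequence `j ↦ ∑ᵢ wᵢ aᵢⱼ` is finitely supported),
then `A` has only finitely many nonzero entries. -/
theorem matrix_prod_to_directSum_finite (K : Type*) [Field K] [Fintype K]
    (A : ℕ → ℕ → K)
    (h : ∀ w : ℕ → K,
        (∀ j, (Function.support fun i => w i * A i j).Finite) ∧
        (Function.support fun j => ∑ᶠ i, w i * A i j).Finite) :
    (Function.support fun p : ℕ × ℕ => A p.1 p.2).Finite :=
  matrix_prod_to_directSum_finite_general K A h
end

section
/- A linear operator A : ℓ → ℓ on a countable-dimensional vector space is Fredholm if and only if there exist surjections/injections realizing it in the canonical form A = g₁ J g₂ with g₁, g₂ invertible and J the block (α+∞)×(β+∞) matrix (0 0; 0 1) with finite α, β; moreover in this case β = dim ker A and α = codim im A. -/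
/-- An operator is Fredholm if its kernel is finite-dimensional and its image has finite
codimension. -/
def IsFredholm {F V : Type*} [Field F] [AddCommGroup V] [Module F V]
    (A : V →ₗ[F] V) : Prop :=
  FiniteDimensional F (LinearMap.ker A) ∧ FiniteDimensional F (V ⧸ LinearMap.range A)

/-!
Up to isomorphisms of source and target, every linear map `A : V → V'` over a division ring is
the block map `ker A × (V ⧸ ker A) → (V' ⧸ range A) × (V ⧸ ker A)`, `(k, x) ↦ (0, x)`: split
`V` along a complement of `ker A`, split `V'` along a complement of `range A`, and identify
`V ⧸ ker A ≃ range A`. The kernel and cokernel of any block map of this shape are its two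
corner blocks, which pins down `β` and `α`.

On `ℓ = ℕ →₀ F`, the middle block `ℓ ⧸ ker A` has dimension `ℵ₀` when `ker A` is
finite-dimensional, so it is isomorphic to `ℓ`; splitting off the first `n` coordinates,
`ℓ ≃ Fⁿ × ℓ`, then turns the block map into the matrix `J`.
-/

open LinearMap Submodule

section BlockForm

variable {R V V' W W' M₁ M₂ N M₁' M₂' N' : Type*} [Ring R]
  [AddCommGroup V] [Module R V] [AddCommGroup V'] [Module R V']
  [AddCommGroup W] [Module R W] [AddCommGroup W'] [Module R W']
  [AddCommGroup M₁] [Module R M₁] [AddCommGroup M₂] [Module R M₂] [AddCommGroup N] [Module R N]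
  [AddCommGroup M₁'] [Module R M₁'] [AddCommGroup M₂'] [Module R M₂']
  [AddCommGroup N'] [Module R N']

def LinearMap.blockForm (e₁ : V ≃ₗ[R] M₁ × N) (e₂ : (M₂ × N) ≃ₗ[R] V') : V →ₗ[R] V' :=
  e₂.toLinearMap ∘ₗ inr R M₂ N ∘ₗ snd R M₁ N ∘ₗ e₁.toLinearMap

@[simp]
lemma LinearMap.blockForm_apply (e₁ : V ≃ₗ[R] M₁ × N) (e₂ : (M₂ × N) ≃ₗ[R] V') (v : V) :
    blockForm e₁ e₂ v = e₂ (0, (e₁ v).2) :=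
  rfl

lemma LinearMap.ker_blockForm (e₁ : V ≃ₗ[R] M₁ × N) (e₂ : (M₂ × N) ≃ₗ[R] V') :
    ker (blockForm e₁ e₂) = (range (inl R M₁ N)).map e₁.symm.toLinearMap := by
  rw [blockForm, LinearEquiv.ker_comp, ker_comp_of_ker_eq_bot _ ker_inr, ker_comp, ker_snd,
    comap_equiv_eq_map_symm]

lemma LinearMap.range_blockForm (e₁ : V ≃ₗ[R] M₁ × N) (e₂ : (M₂ × N) ≃ₗ[R] V') :
    range (blockForm e₁ e₂) = (ker (fst R M₂ N)).map e₂.toLinearMap := by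
  rw [blockForm, range_comp, range_comp, range_comp_of_range_eq_top _ e₁.range, range_snd,
    Submodule.map_top, range_inr]

noncomputable def LinearMap.kerBlockFormEquiv (e₁ : V ≃ₗ[R] M₁ × N) (e₂ : (M₂ × N) ≃ₗ[R] V') :
    ker (blockForm e₁ e₂) ≃ₗ[R] M₁ :=
  LinearEquiv.ofEq _ _ (ker_blockForm e₁ e₂) ≪≫ₗ (e₁.symm.submoduleMap _).symm ≪≫ₗ
    (LinearEquiv.ofInjective _ inl_injective).symm

noncomputable def LinearMap.quotRangeBlockFormEquiv (e₁ : V ≃ₗ[R] M₁ × N)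
    (e₂ : (M₂ × N) ≃ₗ[R] V') : (V' ⧸ range (blockForm e₁ e₂)) ≃ₗ[R] M₂ :=
  (Submodule.Quotient.equiv _ _ e₂ (range_blockForm e₁ e₂).symm).symm ≪≫ₗ
    (fst R M₂ N).quotKerEquivOfSurjective fst_surjective

lemma LinearMap.comp_blockForm_comp (e₁ : V ≃ₗ[R] M₁ × N) (e₂ : (M₂ × N) ≃ₗ[R] V')
    (g₁ : W ≃ₗ[R] V) (g₂ : V' ≃ₗ[R] W') :
    g₂.toLinearMap ∘ₗ blockForm e₁ e₂ ∘ₗ g₁.toLinearMap = blockForm (g₁ ≪≫ₗ e₁) (e₂ ≪≫ₗ g₂) :=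
  rfl

lemma LinearMap.blockForm_eq_comp (e₁ : V ≃ₗ[R] M₁ × N) (e₂ : (M₂ × N) ≃ₗ[R] V')
    (d₁ : W ≃ₗ[R] M₁ × N) (d₂ : (M₂ × N) ≃ₗ[R] W') :
    blockForm e₁ e₂ =
      (d₂.symm ≪≫ₗ e₂).toLinearMap ∘ₗ blockForm d₁ d₂ ∘ₗ (e₁ ≪≫ₗ d₁.symm).toLinearMap := by
  ext v
  simp

lemma LinearMap.blockForm_prodCongr (e₁ : V ≃ₗ[R] M₁ × N) (e₂ : (M₂ × N) ≃ₗ[R] V')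
    (f₁ : M₁ ≃ₗ[R] M₁') (f₂ : M₂ ≃ₗ[R] M₂') (g : N ≃ₗ[R] N') :
    blockForm (e₁ ≪≫ₗ f₁.prodCongr g) ((f₂.prodCongr g).symm ≪≫ₗ e₂) = blockForm e₁ e₂ := by
  ext v
  simp

end BlockForm

lemma LinearMap.isFredholm_blockForm {F V M₁ M₂ N : Type*} [Field F]
    [AddCommGroup V] [Module F V] [AddCommGroup M₁] [Module F M₁] [AddCommGroup M₂] [Module F M₂]
    [AddCommGroup N] [Module F N] [FiniteDimensional F M₁] [FiniteDimensional F M₂]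
    (e₁ : V ≃ₗ[F] M₁ × N) (e₂ : (M₂ × N) ≃ₗ[F] V) :
    IsFredholm (blockForm e₁ e₂) ∧
      Module.finrank F (ker (blockForm e₁ e₂)) = Module.finrank F M₁ ∧
      Module.finrank F (V ⧸ range (blockForm e₁ e₂)) = Module.finrank F M₂ :=
  ⟨⟨(kerBlockFormEquiv e₁ e₂).symm.finiteDimensional,
      (quotRangeBlockFormEquiv e₁ e₂).symm.finiteDimensional⟩,
    (kerBlockFormEquiv e₁ e₂).finrank_eq, (quotRangeBlockFormEquiv e₁ e₂).finrank_eq⟩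

section DivisionRing

variable {K V V' : Type*} [DivisionRing K] [AddCommGroup V] [Module K V]
  [AddCommGroup V'] [Module K V']

theorem LinearMap.exists_eq_blockForm (A : V →ₗ[K] V') :
    ∃ (e₁ : V ≃ₗ[K] ker A × (V ⧸ ker A)) (e₂ : ((V' ⧸ range A) × (V ⧸ ker A)) ≃ₗ[K] V'),
      A = blockForm e₁ e₂ := by
  obtain ⟨W, hW⟩ := (ker A).exists_isCompl
  obtain ⟨C, hC⟩ := (range A).exists_isCompl
  let e₁ := equivProdOfSurjectiveOfIsCompl ((ker A).projectionOnto W hW) (ker A).mkQ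
    (range_projectionOnto hW) (range_mkQ _) (by rw [ker_projectionOnto, ker_mkQ]; exact hW.symm)
  let e₂ := equivProdOfSurjectiveOfIsCompl (range A).mkQ ((range A).projectionOnto C hC)
    (range_mkQ _) (range_projectionOnto hC) (by rw [ker_projectionOnto, ker_mkQ]; exact hC)
  refine ⟨e₁, (LinearEquiv.refl K _).prodCongr A.quotKerEquivRange ≪≫ₗ e₂.symm, ?_⟩
  ext v
  rw [blockForm_apply, LinearEquiv.trans_apply, eq_comm, LinearEquiv.symm_apply_eq]
  refine Prod.ext ?_ ?_
  · exact ((Submodule.Quotient.mk_eq_zero _).mpr (mem_range_self A v)).symm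
  · exact (projectionOnto_apply_left hC ⟨A v, mem_range_self A v⟩).symm

theorem LinearMap.exists_eq_blockForm_fin {N : Type*} [AddCommGroup N] [Module K N]
    (A : V →ₗ[K] V') [FiniteDimensional K (ker A)] [FiniteDimensional K (V' ⧸ range A)]
    (eN : (V ⧸ ker A) ≃ₗ[K] N) :
    ∃ (e₁ : V ≃ₗ[K] (Fin (Module.finrank K (ker A)) →₀ K) × N)
      (e₂ : ((Fin (Module.finrank K (V' ⧸ range A)) →₀ K) × N) ≃ₗ[K] V'),
      A = blockForm e₁ e₂ := by
  obtain ⟨e₁, e₂, hA⟩ := A.exists_eq_blockForm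
  exact ⟨_, _, hA.trans (blockForm_prodCongr e₁ e₂ (Module.finBasis K _).repr
    (Module.finBasis K _).repr eN).symm⟩

theorem rank_quotient_eq_of_finiteDimensional (p : Submodule K V) [FiniteDimensional K p]
    (hV : Cardinal.aleph0 ≤ Module.rank K V) : Module.rank K (V ⧸ p) = Module.rank K V := by
  have hsum := rank_quotient_add_rank_of_divisionRing p
  have hp : Module.rank K p < Cardinal.aleph0 := Module.rank_lt_aleph0 K p
  have hq : Cardinal.aleph0 ≤ Module.rank K (V ⧸ p) := by
    by_contra! h
    exact (Cardinal.add_lt_aleph0 h hp).not_ge (hsum ▸ hV)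
  rw [← hsum, Cardinal.add_eq_left hq (hp.le.trans hq)]

end DivisionRing

namespace Finsupp

section Semiring

variable (R : Type*) [Semiring R]

noncomputable def finSumNatLEquiv (n : ℕ) : ((Fin n →₀ R) × (ℕ →₀ R)) ≃ₗ[R] (ℕ →₀ R) :=
  (sumFinsuppLEquivProdFinsupp R).symm ≪≫ₗ Finsupp.domLCongr (finSumNatEquiv n)

variable {R}

@[simp]
lemma finSumNatLEquiv_single_zero (n : ℕ) (i : Fin n) (r : R) :
    finSumNatLEquiv R n (single i r, 0) = single (i : ℕ) r := by
  simp [finSumNatLEquiv]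

@[simp]
lemma finSumNatLEquiv_zero_single (n m : ℕ) (r : R) :
    finSumNatLEquiv R n (0, single m r) = single (n + m) r := by
  simp [finSumNatLEquiv]

end Semiring

section Ring

variable {R : Type*} [Ring R]

variable (R) in
noncomputable def canonicalForm (α β : ℕ) : (ℕ →₀ R) →ₗ[R] (ℕ →₀ R) :=
  blockForm (finSumNatLEquiv R β).symm (finSumNatLEquiv R α)

lemma canonicalForm_single (α β j : ℕ) (r : R) :
    canonicalForm R α β (single j r) = if j < β then 0 else single (α + (j - β)) r := by
  rw [canonicalForm, blockForm_apply]
  split_ifs with hj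
  · have : (finSumNatLEquiv R β).symm (single j r) = (single ⟨j, hj⟩ r, 0) := by
      rw [LinearEquiv.symm_apply_eq, finSumNatLEquiv_single_zero]
    rw [this, Prod.mk_zero_zero, map_zero]
  · obtain ⟨m, rfl⟩ := Nat.exists_eq_add_of_le (not_lt.mp hj)
    have : (finSumNatLEquiv R β).symm (single (β + m) r) = (0, single m r) := by
      rw [LinearEquiv.symm_apply_eq, finSumNatLEquiv_zero_single]
    rw [this, finSumNatLEquiv_zero_single, Nat.add_sub_cancel_left]

lemma eq_canonicalForm_of_single {α β : ℕ} {J : (ℕ →₀ R) →ₗ[R] (ℕ →₀ R)}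
    (hJ : ∀ j : ℕ, J (single j 1) = if j < β then 0 else single (α + (j - β)) 1) :
    J = canonicalForm R α β :=
  lhom_ext' fun j => LinearMap.ext_ring (by simp [hJ, canonicalForm_single])

end Ring

variable {F : Type*} [Field F]

lemma isFredholm_of_eq_comp_canonicalForm_comp {A : (ℕ →₀ F) →ₗ[F] (ℕ →₀ F)} {α β : ℕ}
    {g₁ g₂ : (ℕ →₀ F) ≃ₗ[F] (ℕ →₀ F)}
    (hA : A = g₂.toLinearMap ∘ₗ canonicalForm F α β ∘ₗ g₁.toLinearMap) :
    IsFredholm A ∧ Module.finrank F (ker A) = β ∧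
      Module.finrank F ((ℕ →₀ F) ⧸ range A) = α := by
  rw [canonicalForm, comp_blockForm_comp] at hA
  subst hA
  obtain ⟨hA, hK, hC⟩ := isFredholm_blockForm
    (g₁ ≪≫ₗ (finSumNatLEquiv F β).symm) (finSumNatLEquiv F α ≪≫ₗ g₂)
  exact ⟨hA, by simpa using hK, by simpa using hC⟩

lemma exists_eq_comp_canonicalForm_comp (A : (ℕ →₀ F) →ₗ[F] (ℕ →₀ F))
    [FiniteDimensional F (ker A)] [FiniteDimensional F ((ℕ →₀ F) ⧸ range A)] :
    ∃ g₁ g₂ : (ℕ →₀ F) ≃ₗ[F] (ℕ →₀ F), A = g₂.toLinearMap ∘ₗ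
      canonicalForm F (Module.finrank F ((ℕ →₀ F) ⧸ range A)) (Module.finrank F (ker A)) ∘ₗ
      g₁.toLinearMap := by
  obtain ⟨eN⟩ : Nonempty (((ℕ →₀ F) ⧸ ker A) ≃ₗ[F] (ℕ →₀ F)) :=
    nonempty_linearEquiv_of_rank_eq (rank_quotient_eq_of_finiteDimensional _ (by simp))
  obtain ⟨e₁, e₂, hA⟩ := A.exists_eq_blockForm_fin eN
  exact ⟨_, _, hA.trans (blockForm_eq_comp _ _ _ _)⟩

end Finsupp

/-- A linear operator `A` on `ℓ = ⊕_{j∈ℕ} F` is Fredholm if and only if it can be written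
as `A = g₁ J g₂` with `g₁, g₂` invertible and `J` the canonical block matrix
`(0 0; 0 1)` of size `(α+∞)×(β+∞)` (sending the first `β` basis vectors to `0` and the
remaining ones bijectively onto the basis vectors of index `≥ α`); moreover in any such
representation `β = dim ker A` and `α = codim im A`. -/
theorem fredholm_iff_canonical_form (F : Type*) [Field F] (A : (ℕ →₀ F) →ₗ[F] (ℕ →₀ F)) :
    (IsFredholm A ↔
      ∃ (α β : ℕ) (g₁ g₂ : (ℕ →₀ F) ≃ₗ[F] (ℕ →₀ F)) (J : (ℕ →₀ F) →ₗ[F] (ℕ →₀ F)),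
        (∀ j : ℕ, J (Finsupp.single j 1) =
          if j < β then 0 else Finsupp.single (α + (j - β)) 1) ∧
        A = g₂.toLinearMap ∘ₗ J ∘ₗ g₁.toLinearMap) ∧
    (∀ (α β : ℕ) (g₁ g₂ : (ℕ →₀ F) ≃ₗ[F] (ℕ →₀ F)) (J : (ℕ →₀ F) →ₗ[F] (ℕ →₀ F)),
        (∀ j : ℕ, J (Finsupp.single j 1) =
          if j < β then 0 else Finsupp.single (α + (j - β)) 1) →
        A = g₂.toLinearMap ∘ₗ J ∘ₗ g₁.toLinearMap →
        β = Module.finrank F (LinearMap.ker A) ∧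
        α = Module.finrank F ((ℕ →₀ F) ⧸ LinearMap.range A)) := by
  refine ⟨⟨fun ⟨_, _⟩ => ?_, ?_⟩, fun α β g₁ g₂ J hJ hA => ?_⟩
  · obtain ⟨g₁, g₂, hA⟩ := Finsupp.exists_eq_comp_canonicalForm_comp A
    exact ⟨_, _, g₁, g₂, _, fun j => Finsupp.canonicalForm_single _ _ j 1, hA⟩
  · rintro ⟨α, β, g₁, g₂, J, hJ, hA⟩
    rw [Finsupp.eq_canonicalForm_of_single hJ] at hA
    exact (Finsupp.isFredholm_of_eq_comp_canonicalForm_comp hA).1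
  · rw [Finsupp.eq_canonicalForm_of_single hJ] at hA
    obtain ⟨-, hK, hC⟩ := Finsupp.isFredholm_of_eq_comp_canonicalForm_comp hA
    exact ⟨hK.symm, hC.symm⟩
end

section
/- Let T : V → W be a linear map and g an invertible linear map of V ⊕ W written in block form (a b; c d), with a + Tc invertible (as a map V → V). Then the image of the graph of T under g equals the graph of the map (a+Tc)^{-1}(b+Td), i.e., graph(T)·g = graph((a+Tc)^{-1}(b+Td)). -/
/-! Parametrise the graph of `T` by `v ↦ (v, vT)`; composing with `g` gives
`v ↦ (v(a + Tc), v(b + Td))`, and reparametrising by `v' = v(a + Tc)`, which is allowed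
because `a + Tc` is invertible, turns this into `v' ↦ (v', v'(a + Tc)⁻¹(b + Td))`. -/

namespace LinearMap

variable {R V V' W : Type*} [Semiring R] [AddCommMonoid V] [AddCommMonoid V'] [AddCommMonoid W]
  [Module R V] [Module R V'] [Module R W]

theorem range_prod_linearEquiv (e : V ≃ₗ[R] V') (f : V →ₗ[R] W) :
    range ((e : V →ₗ[R] V').prod f) = graph (f ∘ₗ (e.symm : V' →ₗ[R] V)) := by
  rw [graph_eq_range_prod, ← LinearEquiv.range_comp e]
  congr 1
  ext v <;> simp

end LinearMap

/-- Linear-fractional action on graphs.  Let `T : V → W` be linear and let `g` be an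
invertible linear map of `V ⊕ W` with block form `(a b; c d)` (row-vector convention:
`(v, w) · g = (v a + w c, v b + w d)`).  If `a + Tc` is invertible, then the image of the
graph of `T` under `g` is the graph of `(a + Tc)⁻¹ (b + Td)`. -/
theorem graph_linear_fractional {K V W : Type*} [Field K]
    [AddCommGroup V] [Module K V] [AddCommGroup W] [Module K W]
    (T : V →ₗ[K] W) (g : (V × W) ≃ₗ[K] (V × W))
    (a : V →ₗ[K] V) (b : V →ₗ[K] W) (c : W →ₗ[K] V) (d : W →ₗ[K] W)
    (hg : ∀ p : V × W, g p = (a p.1 + c p.2, b p.1 + d p.2))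
    (e : V ≃ₗ[K] V) (he : (e : V →ₗ[K] V) = a + c ∘ₗ T) :
    Submodule.map (g : (V × W) →ₗ[K] (V × W)) (LinearMap.graph T) =
      LinearMap.graph ((b + d ∘ₗ T) ∘ₗ (e.symm : V →ₗ[K] V)) := by
  have hblock : (g : (V × W) →ₗ[K] (V × W)) ∘ₗ LinearMap.id.prod T =
      (e : V →ₗ[K] V).prod (b + d ∘ₗ T) := by
    rw [he]
    ext v <;> simp [hg]
  rw [LinearMap.graph_eq_range_prod, ← LinearMap.range_comp, hblock,
    LinearMap.range_prod_linearEquiv]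
end

section
/- For a fixed k, the normalized count q^{-n^2} · #{n-dimensional subspaces L of F_q^{2n} with dim(L ∩ (0 ⊕ F_q^n)) = k} converges as n → ∞ to q^{-k^2} / ∏_{j=1}^k (1 − q^{-j})^2. -/
/-!
Write `V = F_q^n`. A subspace `L ≤ V × V` is determined by `W = {y | (0, y) ∈ L}`, by its
projection `U` to the first factor, and by the linear map `U → V ⧸ W` whose graph modulo `W`
is `L`; here `dim L = dim U + dim W`. So the subspaces in question are counted by
`#Gr(k, V) · #Gr(n - k, V) · q^((n-k)^2)`, and `#Gr(n - k, V) = #Gr(k, V)` by duality. With the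
Gaussian binomial `#Gr(k, V) = q^(k(n-k)) ∏_{i<k} (1 - q^(i-n)) / ∏_{j=1}^k (1 - q^(-j))` the
normalized count becomes `q^(-k^2) ∏_{i<k} (1 - q^(i-n))^2 / ∏_{j=1}^k (1 - q^(-j))^2`, and each
factor `1 - q^(i-n)` tends to `1`.
-/

open Filter Module Finset

namespace Submodule

section GraphMod

variable {R M N : Type*} [Ring R] [AddCommGroup M] [Module R M] [AddCommGroup N] [Module R N]

/-- The graph of `f`, pulled back along `N → N ⧸ W`. -/
def graphMod {W : Submodule R N} {U : Submodule R M} (f : U →ₗ[R] N ⧸ W) :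
    Submodule R (M × N) where
  carrier := {x | ∃ h : x.1 ∈ U, W.mkQ x.2 = f ⟨x.1, h⟩}
  zero_mem' := ⟨U.zero_mem, (map_zero W.mkQ).trans (map_zero f).symm⟩
  add_mem' := by
    rintro a b ⟨ha, ha'⟩ ⟨hb, hb'⟩
    refine ⟨U.add_mem ha hb, ?_⟩
    change W.mkQ (a.2 + b.2) = f (⟨a.1, ha⟩ + ⟨b.1, hb⟩)
    rw [map_add, map_add, ha', hb']
  smul_mem' := by
    rintro c a ⟨ha, ha'⟩
    refine ⟨U.smul_mem c ha, ?_⟩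
    change W.mkQ (c • a.2) = f (c • ⟨a.1, ha⟩)
    rw [map_smul, map_smul, ha']

section

variable {W : Submodule R N} {U : Submodule R M} (f : U →ₗ[R] N ⧸ W)

lemma mem_graphMod {x : M × N} : x ∈ graphMod f ↔ ∃ h : x.1 ∈ U, W.mkQ x.2 = f ⟨x.1, h⟩ :=
  Iff.rfl

lemma comap_inr_graphMod : (graphMod f).comap (LinearMap.inr R M N) = W := by
  ext y
  change (∃ h, W.mkQ y = f ⟨0, h⟩) ↔ y ∈ W
  rw [mkQ_apply, ← Quotient.mk_eq_zero W]
  exact ⟨fun ⟨_, hy⟩ => hy.trans (map_zero f), fun hy => ⟨U.zero_mem, hy.trans (map_zero f).symm⟩⟩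

lemma map_fst_graphMod : (graphMod f).map (LinearMap.fst R M N) = U := by
  ext u
  simp only [mem_map, LinearMap.fst_apply, Prod.exists, exists_and_right, exists_eq_right,
    mem_graphMod]
  refine ⟨fun ⟨_, h, _⟩ => h, fun hu => ?_⟩
  obtain ⟨y, hy⟩ := W.mkQ_surjective (f ⟨u, hu⟩)
  exact ⟨y, hu, hy⟩

end

variable (L : Submodule R (M × N))

lemma ker_submoduleMap_fst_le :
    LinearMap.ker ((LinearMap.fst R M N).submoduleMap L) ≤
      LinearMap.ker ((L.comap (LinearMap.inr R M N)).mkQ ∘ₗ LinearMap.snd R M N ∘ₗ L.subtype) := by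
  rintro ⟨⟨x, y⟩, hxy⟩ hx
  obtain rfl : x = 0 := congrArg Subtype.val hx
  simpa using hxy

noncomputable def graphModFun :
    L.map (LinearMap.fst R M N) →ₗ[R] N ⧸ L.comap (LinearMap.inr R M N) :=
  (LinearMap.ker _).liftQ _ (ker_submoduleMap_fst_le L) ∘ₗ
    (((LinearMap.fst R M N).submoduleMap L).quotKerEquivOfSurjective
      ((LinearMap.fst R M N).submoduleMap_surjective L)).symm.toLinearMap

lemma graphModFun_apply (x : L) :
    graphModFun L ((LinearMap.fst R M N).submoduleMap L x) =
      (L.comap (LinearMap.inr R M N)).mkQ (x : M × N).2 := by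
  simp [graphModFun]

lemma graphMod_graphModFun : graphMod (graphModFun L) = L := by
  ext x
  refine ⟨fun ⟨hx, hfx⟩ => ?_, fun hx => ⟨mem_map_of_mem hx, (graphModFun_apply L ⟨x, hx⟩).symm⟩⟩
  obtain ⟨z, hz, hzx⟩ := mem_map.mp hx
  have hxz : (⟨x.1, hx⟩ : L.map (LinearMap.fst R M N)) =
      (LinearMap.fst R M N).submoduleMap L ⟨z, hz⟩ := Subtype.ext hzx.symm
  rw [hxz, graphModFun_apply, mkQ_apply, mkQ_apply, Quotient.eq, mem_comap] at hfx
  have hx_eq : x = z + LinearMap.inr R M N (x.2 - z.2) := by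
    ext
    · simp [← hzx]
    · simp
  rw [hx_eq]
  exact L.add_mem hz hfx

lemma graphMod_injective :
    Function.Injective fun t : Σ (W : Submodule R N) (U : Submodule R M), U →ₗ[R] N ⧸ W =>
      graphMod t.2.2 := by
  rintro ⟨W, U, f⟩ ⟨W', U', f'⟩ h
  dsimp only at h
  obtain rfl : W = W' := by rw [← comap_inr_graphMod f, h, comap_inr_graphMod]
  obtain rfl : U = U' := by rw [← map_fst_graphMod f, h, map_fst_graphMod]
  obtain rfl : f = f' := by
    ext u
    obtain ⟨y, hy⟩ := W.mkQ_surjective (f u)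
    obtain ⟨_, hy'⟩ : ((u : M), y) ∈ graphMod f' := h ▸ ⟨u.2, hy.trans rfl⟩
    exact hy.symm.trans hy'
  rfl

noncomputable def graphModEquiv :
    Submodule R (M × N) ≃ Σ (W : Submodule R N) (U : Submodule R M), U →ₗ[R] N ⧸ W where
  toFun L := ⟨_, _, graphModFun L⟩
  invFun t := graphMod t.2.2
  left_inv := graphMod_graphModFun
  right_inv :=
    Function.LeftInverse.rightInverse_of_injective graphMod_graphModFun graphMod_injective

end GraphMod

section Finrank

variable {K M N : Type*} [DivisionRing K] [AddCommGroup M] [Module K M] [AddCommGroup N]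
  [Module K N] (L : Submodule K (M × N))

lemma finrank_inf_snd :
    finrank K ↥(L ⊓ snd K M N) = finrank K ↥(L.comap (LinearMap.inr K M N)) := by
  rw [inf_comm, snd, ← LinearMap.ker, LinearMap.ker_fst, ← map_comap_eq]
  exact (equivMapOfInjective _ LinearMap.inr_injective _).finrank_eq.symm

lemma finrank_map_fst_add_finrank_inf_snd [FiniteDimensional K L] :
    finrank K ↥(L.map (LinearMap.fst K M N)) + finrank K ↥(L ⊓ snd K M N) = finrank K L := by
  have h := ((LinearMap.fst K M N).domRestrict L).finrank_range_add_finrank_ker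
  rwa [LinearMap.range_domRestrict, LinearMap.ker_domRestrict, ← finrank_map_subtype_eq,
    map_comap_subtype] at h

end Finrank

end Submodule

lemma Nat.card_sigma_of_card_eq {α : Type*} [Finite α] {β : α → Type*} [∀ a, Finite (β a)]
    {c : ℕ} (h : ∀ a, Nat.card (β a) = c) : Nat.card (Σ a, β a) = Nat.card α * c := by
  have := Fintype.ofFinite α
  simp [Nat.card_sigma, h, Nat.card_eq_fintype_card]

section Grassmannian

variable {K V : Type*} [Field K] [AddCommGroup V] [Module K V]

lemma natCard_submodule_finrank_congr {V' : Type*} [AddCommGroup V'] [Module K V']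
    (e : V ≃ₗ[K] V') (k : ℕ) :
    Nat.card {W : Submodule K V // finrank K W = k} =
      Nat.card {W : Submodule K V' // finrank K W = k} :=
  Nat.card_congr <| (Submodule.orderIsoMapComap e).toEquiv.subtypeEquiv fun W => by
    rw [← e.finrank_map_eq W]; rfl

lemma natCard_submodule_finrank_eq_sub [FiniteDimensional K V] {k : ℕ} (hk : k ≤ finrank K V) :
    Nat.card {W : Submodule K V // finrank K W = k} =
      Nat.card {W : Submodule K V // finrank K W = finrank K V - k} := by
  rw [← natCard_submodule_finrank_congr
    (LinearEquiv.ofFinrankEq (Dual K V) V Subspace.dual_finrank_eq) (finrank K V - k)]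
  refine Nat.card_congr <| ((Subspace.orderIsoFiniteDimensional (K := K) (V := V)).toEquiv.trans
    OrderDual.ofDual).subtypeEquiv fun W => ?_
  have := W.finrank_add_finrank_dualAnnihilator_eq
  change finrank K W = k ↔ finrank K W.dualAnnihilator = finrank K V - k
  omega

lemma span_range_subtype_comp_eq [FiniteDimensional K V] {W : Submodule K V}
    {t : Fin (finrank K W) → W} (ht : LinearIndependent K t) :
    Submodule.span K (Set.range (W.subtype ∘ t)) = W := by
  rw [Set.range_comp, ← Submodule.map_span, ht.span_eq_top_of_card_eq_finrank' (Fintype.card_fin _),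
    Submodule.map_subtype_top]

variable [Fintype K] [Finite V]

/-- Each `k`-dimensional subspace is spanned by exactly `∏_{i<k} (q^k - q^i)` linearly
independent `k`-tuples. -/
theorem natCard_submodule_finrank_mul {k : ℕ} (hk : k ≤ finrank K V) :
    Nat.card {W : Submodule K V // finrank K W = k} *
        ∏ i : Fin k, (Fintype.card K ^ k - Fintype.card K ^ (i : ℕ)) =
      ∏ i : Fin k, (Fintype.card K ^ finrank K V - Fintype.card K ^ (i : ℕ)) := by
  let spanRange (s : {s : Fin k → V // LinearIndependent K s}) :
      {W : Submodule K V // finrank K W = k} :=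
    ⟨Submodule.span K (Set.range s.1), by rw [finrank_span_eq_card s.2, Fintype.card_fin]⟩
  have fiber (W : {W : Submodule K V // finrank K W = k}) :
      {s // spanRange s = W} ≃ {t : Fin k → W.1 // LinearIndependent K t} := by
    obtain ⟨W, rfl⟩ := W
    exact
    { toFun s := ⟨fun i => ⟨s.1.1 i, congrArg Subtype.val s.2 ▸ Submodule.subset_span ⟨i, rfl⟩⟩,
        s.1.2.of_comp W.subtype⟩
      invFun t := ⟨⟨W.subtype ∘ t.1, t.2.map' _ W.ker_subtype⟩,
        Subtype.ext (span_range_subtype_comp_eq t.2)⟩ }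
  rw [← card_linearIndependent hk, ← Nat.card_congr (Equiv.sigmaFiberEquiv spanRange),
    Nat.card_sigma_of_card_eq fun W => ?_]
  rw [Nat.card_congr (fiber W), card_linearIndependent W.2.ge, W.2]

end Grassmannian

section Count

variable {K : Type*} [Field K] [Fintype K]

lemma natCard_linearMap (V W : Type*) [AddCommGroup V] [Module K V] [AddCommGroup W] [Module K W]
    [FiniteDimensional K V] [FiniteDimensional K W] :
    Nat.card (V →ₗ[K] W) = Fintype.card K ^ (finrank K V * finrank K W) := by
  have := Module.finite_of_finite K (M := V →ₗ[K] W)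
  have := Fintype.ofFinite (V →ₗ[K] W)
  rw [Nat.card_eq_fintype_card, card_eq_pow_finrank (K := K), finrank_linearMap]

variable {M N : Type*} [AddCommGroup M] [Module K M] [AddCommGroup N] [Module K N]
  [Finite M] [Finite N]

theorem natCard_submodule_prod (a b : ℕ) :
    Nat.card {L : Submodule K (M × N) // finrank K ↥(L.map (LinearMap.fst K M N)) = a ∧
        finrank K ↥(L.comap (LinearMap.inr K M N)) = b} =
      Nat.card {W : Submodule K N // finrank K W = b} *
        (Nat.card {U : Submodule K M // finrank K U = a} *
          Fintype.card K ^ (a * (finrank K N - b))) := by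
  let e : {L : Submodule K (M × N) // finrank K ↥(L.map (LinearMap.fst K M N)) = a ∧
        finrank K ↥(L.comap (LinearMap.inr K M N)) = b} ≃
      Σ (W : {W : Submodule K N // finrank K W = b}) (U : {U : Submodule K M // finrank K U = a}),
        U.1 →ₗ[K] N ⧸ W.1 :=
    (Submodule.graphModEquiv.subtypeEquiv (q := fun t => finrank K t.2.1 = a ∧ finrank K t.1 = b)
      fun _ => Iff.rfl).trans
      { toFun t := ⟨⟨t.1.1, t.2.2⟩, ⟨t.1.2.1, t.2.1⟩, t.1.2.2⟩
        invFun s := ⟨⟨s.1.1, s.2.1.1, s.2.2⟩, s.2.1.2, s.1.2⟩ }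
  have (W : Submodule K N) (U : Submodule K M) : Finite (U →ₗ[K] N ⧸ W) :=
    Module.finite_of_finite K
  rw [Nat.card_congr e]
  refine Nat.card_sigma_of_card_eq fun W => Nat.card_sigma_of_card_eq fun U => ?_
  rw [natCard_linearMap, U.2, W.1.finrank_quotient, W.2]

theorem natCard_submodule_prod_finrank_inf_snd {d k : ℕ} (hk : k ≤ d) :
    Nat.card {L : Submodule K (M × N) //
        finrank K L = d ∧ finrank K ↥(L ⊓ Submodule.snd K M N) = k} =
      Nat.card {W : Submodule K N // finrank K W = k} *
        (Nat.card {U : Submodule K M // finrank K U = d - k} *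
          Fintype.card K ^ ((d - k) * (finrank K N - k))) := by
  rw [← natCard_submodule_prod]
  refine Nat.card_congr (Equiv.subtypeEquivRight fun L => ?_)
  have := L.finrank_map_fst_add_finrank_inf_snd
  rw [L.finrank_inf_snd] at this ⊢
  omega

end Count

section Asymptotics

lemma prod_range_comp_sub_eq_prod_Icc {M : Type*} [CommMonoid M] (f : ℕ → M) (k : ℕ) :
    ∏ i ∈ range k, f (k - i) = ∏ j ∈ Icc 1 k, f j := by
  refine prod_nbij' (k - ·) (k - ·) ?_ ?_ ?_ ?_ fun _ _ => rfl <;>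
    intro i hi <;> simp only [mem_range, mem_Icc] at hi ⊢ <;> omega

lemma Nat.cast_prod_pow_sub_pow {F : Type*} [Field F] [CharZero F] {q : ℕ} (hq : 0 < q)
    {k n : ℕ} (hk : k ≤ n) :
    ((∏ i : Fin k, (q ^ n - q ^ (i : ℕ)) : ℕ) : F) =
      (q : F) ^ (n * k) * ∏ i ∈ range k, (1 - (q : F)⁻¹ ^ (n - i)) := by
  have hq' : (q : F) ≠ 0 := by exact_mod_cast hq.ne'
  have hpow : ((q : F) ^ n) ^ k = ∏ _i ∈ range k, (q : F) ^ n := by rw [prod_const, card_range]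
  rw [Fin.prod_univ_eq_prod_range (fun i => q ^ n - q ^ i), Nat.cast_prod, pow_mul, hpow,
    ← prod_mul_distrib]
  refine prod_congr rfl fun i hi => ?_
  have hin : i ≤ n := (mem_range.mp hi).le.trans hk
  rw [Nat.cast_sub (Nat.pow_le_pow_right hq hin), mul_sub, mul_one, inv_pow, ← div_eq_mul_inv,
    pow_sub₀ _ hq' hin]
  push_cast
  field_simp

lemma tendsto_prod_range_one_sub_pow {r : ℝ} (hr0 : 0 ≤ r) (hr1 : r < 1) (k : ℕ) :
    Tendsto (fun n => ∏ i ∈ range k, (1 - r ^ (n - i))) atTop (nhds 1) := by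
  rw [← prod_const_one (s := range k)]
  refine tendsto_finsetProd _ fun i _ => ?_
  simpa using tendsto_const_nhds.sub
    ((tendsto_pow_atTop_nhds_zero_of_lt_one hr0 hr1).comp (tendsto_sub_atTop_nat i))

variable {K : Type*} [Field K] [Fintype K]

local notation "q" => (Fintype.card K : ℝ)

lemma inv_card_lt_one : q⁻¹ < 1 :=
  inv_lt_one_of_one_lt₀ (by exact_mod_cast Fintype.one_lt_card)

lemma natCard_submodule_finrank_mul_prod_one_sub {V : Type*} [AddCommGroup V] [Module K V]
    [Finite V] {k : ℕ} (hk : k ≤ finrank K V) :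
    (Nat.card {W : Submodule K V // finrank K W = k} : ℝ) *
        (q ^ (k * k) * ∏ j ∈ Icc 1 k, (1 - q⁻¹ ^ j)) =
      q ^ (finrank K V * k) * ∏ i ∈ range k, (1 - q⁻¹ ^ (finrank K V - i)) := by
  have h := congrArg (Nat.cast : ℕ → ℝ) (natCard_submodule_finrank_mul hk)
  rwa [Nat.cast_mul, Nat.cast_prod_pow_sub_pow Fintype.card_pos le_rfl,
    Nat.cast_prod_pow_sub_pow Fintype.card_pos hk,
    prod_range_comp_sub_eq_prod_Icc (fun j => 1 - q⁻¹ ^ j)] at h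

theorem normalized_natCard_eq {n k : ℕ} (hk : k ≤ n) :
    q⁻¹ ^ (n ^ 2) *
        (Nat.card {L : Submodule K ((Fin n → K) × (Fin n → K)) //
          finrank K L = n ∧
            finrank K ↥(L ⊓ Submodule.snd K (Fin n → K) (Fin n → K)) = k} : ℝ) =
      q⁻¹ ^ (k ^ 2) * (∏ i ∈ range k, (1 - q⁻¹ ^ (n - i))) ^ 2 /
        (∏ j ∈ Icc 1 k, (1 - q⁻¹ ^ j)) ^ 2 := by
  have hV : finrank K (Fin n → K) = n := finrank_fin_fun K
  have hdual := natCard_submodule_finrank_eq_sub (K := K) (V := Fin n → K) (hV ▸ hk)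
  have hG := natCard_submodule_finrank_mul_prod_one_sub (K := K) (V := Fin n → K) (hV ▸ hk)
  rw [hV] at hdual hG
  rw [natCard_submodule_prod_finrank_inf_snd hk, hV, ← hdual]
  have hq : q ≠ 0 := by exact_mod_cast Fintype.card_ne_zero
  have hP0 : ∏ j ∈ Icc 1 k, (1 - q⁻¹ ^ j) ≠ 0 :=
    prod_ne_zero_iff.mpr fun j hj => sub_ne_zero.mpr (pow_lt_one₀ (by positivity) inv_card_lt_one
      (Nat.one_le_iff_ne_zero.mp (mem_Icc.mp hj).1)).ne'
  obtain ⟨m, rfl⟩ := Nat.exists_eq_add_of_le' hk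
  rw [← eq_div_iff (mul_ne_zero (pow_ne_zero _ hq) hP0)] at hG
  rw [Nat.add_sub_cancel, Nat.cast_mul, Nat.cast_mul, Nat.cast_pow, hG, inv_pow, inv_pow]
  field_simp
  ring

end Asymptotics

/-- For fixed `k`, the normalized count
`q^{-n^2} · #{n-dimensional subspaces L of F_q^{2n} with dim(L ∩ (0 ⊕ F_q^n)) = k}`
converges as `n → ∞` to `q^{-k^2} / ∏_{j=1}^k (1 − q^{-j})^2`. -/
theorem normalized_count_intersection_tendsto (K : Type*) [Field K] [Fintype K] (k : ℕ) :
    Tendsto (fun n : ℕ => ((Fintype.card K : ℝ))⁻¹ ^ (n ^ 2) *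
        (Nat.card {L : Submodule K ((Fin n → K) × (Fin n → K)) //
            Module.finrank K L = n ∧
            Module.finrank K ↥(L ⊓ Submodule.snd K (Fin n → K) (Fin n → K)) = k} : ℝ))
      atTop
      (nhds (((Fintype.card K : ℝ))⁻¹ ^ (k ^ 2) /
        ∏ j ∈ Finset.Icc 1 k, (1 - ((Fintype.card K : ℝ))⁻¹ ^ j) ^ 2)) := by
  have hprod := tendsto_prod_range_one_sub_pow (by positivity) (inv_card_lt_one (K := K)) k
  have hlim := ((hprod.pow 2).const_mul ((Fintype.card K : ℝ)⁻¹ ^ (k ^ 2))).div_const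
    ((∏ j ∈ Icc 1 k, (1 - (Fintype.card K : ℝ)⁻¹ ^ j)) ^ 2)
  rw [one_pow, mul_one] at hlim
  rw [prod_pow]
  exact hlim.congr' (eventually_atTop.mpr ⟨k, fun n hn => (normalized_natCard_eq hn).symm⟩)
end
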